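/- arXiv:math/0405274 — 3 statements merged into one kernel-verified Lean document; each statement's English description precedes it below -/
import Mathlib

section
/- Let X be an infinite connected graph of bounded valence with base point x₀, and let X⁺ be the graph obtained from X by adding one new vertex v connected by an edge to x₀. Then there is a bilipschitz equivalence between X and X⁺; hence for any pointed graph Y, X*Y and X⁺*Y are bilipschitz equivalent. -/
/-! All spaces are vertex sets of connected graphs of bounded valence, with the
path metric (`SimpleGraph.dist`) in which every edge has length 1. -/

/-- `f` is an `L`-bilipschitz equivalence between the path metrics of the
graphs `G` and `H`. -/
def IsBilipEquiv (L : ℝ) {V W : Type*} (G : SimpleGraph V) (H : SimpleGraph W)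
    (f : V → W) : Prop :=
  Function.Bijective f ∧
    ∀ u v : V, (G.dist u v : ℝ) / L ≤ H.dist (f u) (f v) ∧
      (H.dist (f u) (f v) : ℝ) ≤ L * G.dist u v

/-- The graphs `G` and `H` are bilipschitz equivalent. -/
def BilipEquiv {V W : Type*} (G : SimpleGraph V) (H : SimpleGraph W) : Prop :=
  ∃ L > (0 : ℝ), ∃ f : V → W, IsBilipEquiv L G H f

/-- A connected graph of bounded valence. -/
def GoodGraph {V : Type*} (G : SimpleGraph V) : Prop :=
  G.Connected ∧ ∃ D : ℕ, ∀ v : V, (G.neighborSet v).ncard ≤ D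

/-- A graph is homogeneous with constant `L` if any vertex can be carried to
any other vertex by an `L`-bilipschitz self-map. -/
def HomogeneousWith (L : ℝ) {V : Type*} (G : SimpleGraph V) : Prop :=
  ∀ x₁ x₂ : V, ∃ f : V → V, IsBilipEquiv L G G f ∧ f x₁ = x₂

/-- A graph is homogeneous if it is homogeneous with some constant `L > 0`. -/
def Homogeneous {V : Type*} (G : SimpleGraph V) : Prop :=
  ∃ L > (0 : ℝ), HomogeneousWith L G

/-- The letter `a` is a base-point letter. -/
def IsBaseLetter {X Y : Type*} (x₀ : X) (y₀ : Y) : X ⊕ Y → Prop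
  | .inl x => x = x₀
  | .inr y => y = y₀

/-- The vertices of the free product `(X,x₀) * (Y,y₀)` of pointed graphs:
nonempty alternating words starting with an `X`-letter, all of whose interior
letters (neither first nor last) are not base points.  The last letter records
the actual vertex in its copy of `X` or `Y`; the other letters record the
address of this copy in the tree of spaces. -/
def ValidWord {X Y : Type*} (x₀ : X) (y₀ : Y) (w : List (X ⊕ Y)) : Prop :=
  w ≠ [] ∧ (∀ a ∈ w.head?, a.isLeft = true) ∧
    List.Chain' (fun a b => b.isLeft = !a.isLeft) w ∧
    ∀ i : Fin w.length, 0 < (i : ℕ) → (i : ℕ) + 1 < w.length →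
      ¬ IsBaseLetter x₀ y₀ (w.get i)

/-- The vertex set of the free product of pointed graphs. -/
def FPWord {X Y : Type*} (x₀ : X) (y₀ : Y) : Type _ :=
  {w : List (X ⊕ Y) // ValidWord x₀ y₀ w}

/-- The free product `(X,x₀) * (Y,y₀)` of two pointed graphs: the tree of
spaces obtained by alternately attaching copies of `X` and `Y` along base
points, so that every vertex is incident to exactly one edge leaving its copy.
Two words are adjacent iff they lie in a common copy of `X` or `Y` (same
address, adjacent last letters), or one is obtained from the other by
appending a base-point letter (the unique edge leaving a copy). -/
def freeProd {X Y : Type*} (Gx : SimpleGraph X) (Gy : SimpleGraph Y) (x₀ : X) (y₀ : Y) :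
    SimpleGraph (FPWord x₀ y₀) :=
  SimpleGraph.fromRel (fun u v =>
    (∃ (w : List (X ⊕ Y)) (a b : X), Gx.Adj a b ∧
        u.1 = w ++ [Sum.inl a] ∧ v.1 = w ++ [Sum.inl b]) ∨
    (∃ (w : List (X ⊕ Y)) (a b : Y), Gy.Adj a b ∧
        u.1 = w ++ [Sum.inr a] ∧ v.1 = w ++ [Sum.inr b]) ∨
    u.1 = v.1 ++ [Sum.inl x₀] ∨ u.1 = v.1 ++ [Sum.inr y₀])

/-- The base point of the free product: the base point `x₀` of the initial
copy of `X`; it is one endpoint of the base edge. -/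
def basePointX {X Y : Type*} (x₀ : X) (y₀ : Y) : FPWord x₀ y₀ :=
  ⟨[Sum.inl x₀], by
    refine ⟨by simp, by simp, by simp [List.Chain', List.isChain_pair], ?_⟩
    intro i h1 h2
    simp only [List.length_cons, List.length_nil] at h2
    exact absurd h1 (by omega)⟩

/-- The base point `y₀` of the initial copy of `Y` in the free product: the
other endpoint of the base edge. -/
def basePointY {X Y : Type*} (x₀ : X) (y₀ : Y) : FPWord x₀ y₀ :=
  ⟨[Sum.inl x₀, Sum.inr y₀], by
    refine ⟨by simp, by simp, by simp [List.Chain', List.isChain_pair], ?_⟩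
    intro i h1 h2
    simp only [List.length_cons, List.length_nil] at h2
    exact absurd h1 (by omega)⟩

/-- The wedge of two pointed graphs: their disjoint union with an edge added
connecting the two base points. -/
def wedgeGraph {V W : Type*} (G : SimpleGraph V) (H : SimpleGraph W) (v₀ : V) (w₀ : W) :
    SimpleGraph (V ⊕ W) :=
  SimpleGraph.fromRel (fun u v =>
    (∃ a b, G.Adj a b ∧ u = Sum.inl a ∧ v = Sum.inl b) ∨
    (∃ a b, H.Adj a b ∧ u = Sum.inr a ∧ v = Sum.inr b) ∨
    (u = Sum.inl v₀ ∧ v = Sum.inr w₀))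


/-- The graph `X⁺` obtained from a pointed graph `(X, x₀)` by adding one new
vertex (`none`) connected by an edge to the base point `x₀`. -/
def plusGraph {X : Type*} (Gx : SimpleGraph X) (x₀ : X) : SimpleGraph (Option X) :=
  SimpleGraph.fromRel (fun u v =>
    (∃ a b, Gx.Adj a b ∧ u = some a ∧ v = some b) ∨ (u = none ∧ v = some x₀))

/-! `X` contains an injective sequence `r` avoiding `x₀` whose consecutive terms are at distance at
most 2: a geodesic ray from `x₀` (Kőnig's lemma) if `X` is locally finite, and the neighbours of a
vertex of infinite valence otherwise. Shifting each `r n` to `r (n + 1)` frees `r 0` for the new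
vertex of `X⁺`; the resulting bijection `X⁺ ≃ X` moves every point a bounded distance, so it is
bilipschitz. It sends `x₀` to `x₀`, so applied letterwise it is also a bilipschitz bijection between
the free products. -/

open SimpleGraph

section Lipschitz

variable {V W : Type*} {G : SimpleGraph V} {H : SimpleGraph W}

theorem SimpleGraph.Walk.dist_le_mul_length_of_forall_adj (hH : H.Preconnected) {f : V → W}
    {C : ℕ} (hf : ∀ u v, G.Adj u v → H.dist (f u) (f v) ≤ C) {u v : V} (p : G.Walk u v) :
    H.dist (f u) (f v) ≤ C * p.length := by
  induction p with
  | nil => simp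
  | @cons a b c hab p ih =>
    calc H.dist (f a) (f c) ≤ H.dist (f a) (f b) + H.dist (f b) (f c) :=
          (hH _ _).dist_triangle_left _
      _ ≤ C + C * p.length := add_le_add (hf a b hab) ih
      _ = C * (cons hab p).length := by rw [Walk.length_cons]; ring

theorem dist_le_mul_dist_of_forall_adj (hG : G.Preconnected) (hH : H.Preconnected) {f : V → W}
    {C : ℕ} (hf : ∀ u v, G.Adj u v → H.dist (f u) (f v) ≤ C) (u v : V) :
    H.dist (f u) (f v) ≤ C * G.dist u v := by
  obtain ⟨p, hp⟩ := (hG u v).exists_walk_length_eq_dist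
  exact hp ▸ p.dist_le_mul_length_of_forall_adj hH hf

theorem dist_le_of_adj_of_forall_dist_le (hH : H.Preconnected) {f φ : V → W} {B : ℕ}
    (hφ : ∀ u v, G.Adj u v → H.dist (φ u) (φ v) ≤ 1) (hf : ∀ v, H.dist (f v) (φ v) ≤ B)
    {u v : V} (huv : G.Adj u v) : H.dist (f u) (f v) ≤ 2 * B + 1 :=
  calc H.dist (f u) (f v) ≤ H.dist (f u) (φ u) + (H.dist (φ u) (φ v) + H.dist (φ v) (f v)) :=
        ((hH _ _).dist_triangle_left _).trans (add_le_add le_rfl ((hH _ _).dist_triangle_left _))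
    _ ≤ B + (1 + B) := add_le_add (hf u) (add_le_add (hφ u v huv) (dist_comm ▸ hf v))
    _ = 2 * B + 1 := by ring

theorem bilipEquiv_of_equiv (hG : G.Preconnected) (hH : H.Preconnected) (e : V ≃ W) {C : ℕ}
    (hC : 0 < C) (he : ∀ u v, G.Adj u v → H.dist (e u) (e v) ≤ C)
    (he' : ∀ u v, H.Adj u v → G.dist (e.symm u) (e.symm v) ≤ C) : BilipEquiv G H := by
  have hCR : (0 : ℝ) < C := by exact_mod_cast hC
  refine ⟨C, hCR, e, e.bijective, fun u v => ⟨?_, ?_⟩⟩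
  · have := dist_le_mul_dist_of_forall_adj hH hG he' (e u) (e v)
    simp only [Equiv.symm_apply_apply] at this
    rw [div_le_iff₀ hCR, mul_comm]
    exact_mod_cast this
  · exact_mod_cast dist_le_mul_dist_of_forall_adj hG hH he u v

end Lipschitz

section PlusGraph

variable {X : Type*} {Gx : SimpleGraph X} {x₀ : X}

theorem plusGraph_adj_some {a b : X} (h : Gx.Adj a b) :
    (plusGraph Gx x₀).Adj (some a) (some b) := by
  rw [plusGraph, fromRel_adj]
  exact ⟨by simpa using h.ne, Or.inl (Or.inl ⟨a, b, h, rfl, rfl⟩)⟩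

theorem plusGraph_adj_none : (plusGraph Gx x₀).Adj none (some x₀) := by
  rw [plusGraph, fromRel_adj]
  exact ⟨by simp, Or.inl (Or.inr ⟨rfl, rfl⟩)⟩

theorem plusGraph_dist_getD_le_one {u v : Option X} (h : (plusGraph Gx x₀).Adj u v) :
    Gx.dist (u.getD x₀) (v.getD x₀) ≤ 1 := by
  rw [plusGraph, fromRel_adj] at h
  rcases h.2 with (⟨a, b, hab, rfl, rfl⟩ | ⟨rfl, rfl⟩) | (⟨a, b, hab, rfl, rfl⟩ | ⟨rfl, rfl⟩)
  · exact (dist_eq_one_iff_adj.mpr hab).le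
  · simp
  · exact (dist_eq_one_iff_adj.mpr hab.symm).le
  · simp

def plusGraphHom (Gx : SimpleGraph X) (x₀ : X) : Gx →g plusGraph Gx x₀ where
  toFun := some
  map_rel' := plusGraph_adj_some

theorem plusGraph_preconnected (hX : Gx.Preconnected) : (plusGraph Gx x₀).Preconnected := by
  have hsome (a : X) : (plusGraph Gx x₀).Reachable (some a) (some x₀) :=
    (hX a x₀).map (plusGraphHom Gx x₀)
  rintro (_ | a) (_ | b)
  · rfl
  · exact plusGraph_adj_none.reachable.trans (hsome b).symm
  · exact (hsome a).trans plusGraph_adj_none.reachable.symm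
  · exact (hsome a).trans (hsome b).symm

theorem plusGraph_dist_some_le (hX : Gx.Preconnected) (a b : X) :
    (plusGraph Gx x₀).dist (some a) (some b) ≤ Gx.dist a b := by
  simpa using dist_le_mul_dist_of_forall_adj hX (plusGraph_preconnected hX) (f := some) (C := 1)
    (fun a b h => (dist_eq_one_iff_adj.mpr (plusGraph_adj_some h)).le) a b

end PlusGraph

section Ray

variable {V : Type*} {G : SimpleGraph V}

def SimpleGraph.geodesicShadow (G : SimpleGraph V) (x₀ v : V) : Set V :=
  {w | G.dist x₀ w = G.dist x₀ v + G.dist v w}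

theorem geodesicShadow_subset_insert_biUnion (hG : G.Preconnected) (x₀ v : V) :
    G.geodesicShadow x₀ v ⊆ insert v (⋃ u ∈ {u | G.Adj v u ∧ G.dist x₀ u = G.dist x₀ v + 1},
      G.geodesicShadow x₀ u) := by
  intro w hw
  rcases eq_or_ne w v with rfl | hwv
  · exact Set.mem_insert _ _
  obtain ⟨p, hp⟩ := (hG v w).exists_walk_length_eq_dist
  cases p with
  | nil => exact absurd rfl hwv
  | @cons _ c _ hvc q =>
    have hvc1 : G.dist v c = 1 := dist_eq_one_iff_adj.mpr hvc
    have hq : G.dist c w ≤ q.length := dist_le q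
    have h₁ := (hG v c).dist_triangle_left w
    have h₂ := (hG x₀ v).dist_triangle_left c
    have h₃ := (hG x₀ c).dist_triangle_left w
    have hw' : G.dist x₀ w = G.dist x₀ v + G.dist v w := hw
    rw [Walk.length_cons] at hp
    have hc : G.dist x₀ c = G.dist x₀ v + 1 := by omega
    refine Set.mem_insert_of_mem _ (Set.mem_biUnion (x := c) ⟨hvc, hc⟩ ?_)
    show G.dist x₀ w = G.dist x₀ c + G.dist c w
    omega

theorem exists_adj_geodesicShadow_infinite (hG : G.Preconnected) {x₀ v : V}
    (hv : (G.neighborSet v).Finite) (hS : (G.geodesicShadow x₀ v).Infinite) :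
    ∃ u, G.Adj v u ∧ G.dist x₀ u = G.dist x₀ v + 1 ∧ (G.geodesicShadow x₀ u).Infinite := by
  by_contra! hfin
  refine hS ((Set.Finite.insert v ?_).subset (geodesicShadow_subset_insert_biUnion hG x₀ v))
  exact (hv.subset fun u hu => hu.1).biUnion fun u hu => hfin u hu.1 hu.2

theorem exists_geodesic_ray [Infinite V] (hG : G.Preconnected)
    (hlf : ∀ v, (G.neighborSet v).Finite) (x₀ : V) :
    ∃ r : ℕ → V, ∀ n, G.Adj (r n) (r (n + 1)) ∧ G.dist x₀ (r n) = n := by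
  choose! next hadj hdist hinf using
    fun v => exists_adj_geodesicShadow_infinite hG (x₀ := x₀) (hlf v)
  have key (n : ℕ) :
      (G.geodesicShadow x₀ (next^[n] x₀)).Infinite ∧ G.dist x₀ (next^[n] x₀) = n := by
    induction n with
    | zero => simpa [geodesicShadow] using Set.infinite_univ
    | succ n ih =>
      rw [Function.iterate_succ_apply']
      exact ⟨hinf _ ih.1, by rw [hdist _ ih.1, ih.2]⟩
  refine ⟨fun n => next^[n] x₀, fun n => ⟨?_, (key n).2⟩⟩
  simp only [Function.iterate_succ_apply']
  exact hadj _ (key n).1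

theorem exists_injective_seq_dist_succ_le_two [Infinite V] (hG : G.Preconnected) (x₀ : V) :
    ∃ r : ℕ → V, Function.Injective r ∧ (∀ n, G.dist (r n) (r (n + 1)) ≤ 2) ∧ ∀ n, r n ≠ x₀ := by
  by_cases hlf : ∀ v, (G.neighborSet v).Finite
  · obtain ⟨r, hr⟩ := exists_geodesic_ray hG hlf x₀
    refine ⟨fun n => r (n + 1), fun m n h => ?_, fun n => ?_, fun n h => ?_⟩
    · have hm := (hr (m + 1)).2
      have hn := (hr (n + 1)).2
      simp only at h
      rw [h] at hm
      omega
    · exact (dist_eq_one_iff_adj.mpr (hr (n + 1)).1).le.trans one_le_two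
    · have hn := (hr (n + 1)).2
      simp only at h
      rw [h, dist_self] at hn
      omega
  · obtain ⟨v, hv⟩ := not_forall.mp hlf
    let e := (Set.Infinite.sdiff hv (Set.finite_singleton x₀)).natEmbedding
    refine ⟨fun n => (e n).1, fun m n h => e.injective (Subtype.ext h), fun n => ?_,
      fun n => (e n).2.2⟩
    calc G.dist (e n).1 (e (n + 1)).1 ≤ G.dist (e n).1 v + G.dist v (e (n + 1)).1 :=
          (hG _ _).dist_triangle_left _
      _ ≤ 1 + 1 := add_le_add (dist_eq_one_iff_adj.mpr (e n).2.1.symm).le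
          (dist_eq_one_iff_adj.mpr (e (n + 1)).2.1).le

end Ray

theorem Function.partialInv_eq_none_of_notMem {α β : Type*} {f : α → β} {b : β}
    (hb : b ∉ Set.range f) : Function.partialInv f b = none :=
  dif_neg (by simpa using hb)

section RayShift

variable {X : Type*} {r : ℕ → X}

noncomputable def rayShift (hr : Function.Injective r) : Option X ≃ X where
  toFun
    | none => r 0
    | some x => match Function.partialInv r x with
      | none => x
      | some n => r (n + 1)
  invFun x := match Function.partialInv r x with
    | none => some x
    | some 0 => none
    | some (n + 1) => some (r n)
  left_inv := by
    rintro (_ | x)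
    · simp [Function.partialInv_left hr]
    · by_cases hx : x ∈ Set.range r
      · obtain ⟨n, rfl⟩ := hx
        simp [Function.partialInv_left hr]
      · simp [Function.partialInv_eq_none_of_notMem hx]
  right_inv x := by
    by_cases hx : x ∈ Set.range r
    · obtain ⟨_ | n, rfl⟩ := hx <;> simp [Function.partialInv_left hr]
    · simp [Function.partialInv_eq_none_of_notMem hx]

variable (hr : Function.Injective r)

@[simp] theorem rayShift_none : rayShift hr none = r 0 := rfl

@[simp] theorem rayShift_some_apply (n : ℕ) : rayShift hr (some (r n)) = r (n + 1) := by
  simp [rayShift, Function.partialInv_left hr]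

theorem rayShift_some_of_notMem {x : X} (hx : x ∉ Set.range r) : rayShift hr (some x) = x := by
  simp [rayShift, Function.partialInv_eq_none_of_notMem hx]

@[simp] theorem rayShift_symm_apply_zero : (rayShift hr).symm (r 0) = none := by
  rw [Equiv.symm_apply_eq, rayShift_none]

@[simp] theorem rayShift_symm_apply_succ (n : ℕ) :
    (rayShift hr).symm (r (n + 1)) = some (r n) := by
  rw [Equiv.symm_apply_eq, rayShift_some_apply]

theorem rayShift_symm_apply_of_notMem {x : X} (hx : x ∉ Set.range r) :
    (rayShift hr).symm x = some x := by
  rw [Equiv.symm_apply_eq, rayShift_some_of_notMem hr hx]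

variable {Gx : SimpleGraph X} {x₀ : X} (hX : Gx.Preconnected)
  (hr₂ : ∀ n, Gx.dist (r n) (r (n + 1)) ≤ 2)
include hr₂

theorem dist_rayShift_getD_le (o : Option X) :
    Gx.dist (rayShift hr o) (o.getD x₀) ≤ Gx.dist x₀ (r 0) + 2 := by
  rcases o with _ | x
  · simp [dist_comm]
  · by_cases hx : x ∈ Set.range r
    · obtain ⟨n, rfl⟩ := hx
      simpa [dist_comm] using (hr₂ n).trans (Nat.le_add_left _ _)
    · simp [rayShift_some_of_notMem hr hx]

include hX

theorem dist_rayShift_symm_le (x : X) :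
    (plusGraph Gx x₀).dist ((rayShift hr).symm x) (some x) ≤ Gx.dist x₀ (r 0) + 2 := by
  by_cases hx : x ∈ Set.range r
  · obtain ⟨_ | n, rfl⟩ := hx
    · calc (plusGraph Gx x₀).dist ((rayShift hr).symm (r 0)) (some (r 0))
          ≤ (plusGraph Gx x₀).dist none (some x₀) + (plusGraph Gx x₀).dist (some x₀) (some (r 0)) :=
            by simpa using (plusGraph_preconnected hX _ _).dist_triangle_left _
        _ ≤ 1 + Gx.dist x₀ (r 0) :=
            add_le_add (dist_eq_one_iff_adj.mpr plusGraph_adj_none).le (plusGraph_dist_some_le hX _ _)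
        _ ≤ Gx.dist x₀ (r 0) + 2 := by omega
    · simpa using ((plusGraph_dist_some_le hX _ _).trans (hr₂ n)).trans (Nat.le_add_left _ _)
  · simp [rayShift_symm_apply_of_notMem hr hx]

theorem dist_rayShift_le_of_adj {u v : Option X} (huv : (plusGraph Gx x₀).Adj u v) :
    Gx.dist (rayShift hr u) (rayShift hr v) ≤ 2 * (Gx.dist x₀ (r 0) + 2) + 1 :=
  dist_le_of_adj_of_forall_dist_le hX (fun _ _ => plusGraph_dist_getD_le_one)
    (dist_rayShift_getD_le hr hr₂) huv

theorem dist_rayShift_symm_le_of_adj {a b : X} (hab : Gx.Adj a b) :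
    (plusGraph Gx x₀).dist ((rayShift hr).symm a) ((rayShift hr).symm b) ≤
      2 * (Gx.dist x₀ (r 0) + 2) + 1 :=
  dist_le_of_adj_of_forall_dist_le (plusGraph_preconnected hX)
    (fun _ _ h => (dist_eq_one_iff_adj.mpr (plusGraph_adj_some h)).le)
    (dist_rayShift_symm_le hr hX hr₂) hab

end RayShift

section FreeProduct

variable {X X' Y : Type*} {x₀ : X} {x₀' : X'} {y₀ : Y}
  {Gx : SimpleGraph X} {Gx' : SimpleGraph X'} {Gy : SimpleGraph Y}

theorem ValidWord.append_singleton_of_isLeft_eq {w : List (X ⊕ Y)} {a b : X ⊕ Y}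
    (h : ValidWord x₀ y₀ (w ++ [a])) (hab : b.isLeft = a.isLeft) :
    ValidWord x₀ y₀ (w ++ [b]) := by
  obtain ⟨-, hhead, hchain, hint⟩ := h
  refine ⟨by simp, ?_, ?_, fun i hi₁ hi₂ => ?_⟩
  · cases w with
    | nil => simpa [hab] using hhead
    | cons d l => simpa using hhead
  · rw [List.Chain', List.isChain_append] at hchain ⊢
    refine ⟨hchain.1, by simp, fun c hc d hd => ?_⟩
    obtain rfl : b = d := by simpa using hd
    rw [hab]
    exact hchain.2.2 c hc a (by simp)
  · have hi : (i : ℕ) < w.length := by simpa using hi₂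
    have := hint ⟨i, by simp; omega⟩ hi₁ (by simpa using hi₂)
    simpa [List.getElem_append_left hi] using this

theorem ValidWord.of_append_singleton {w : List (X ⊕ Y)} {a : X ⊕ Y}
    (h : ValidWord x₀ y₀ (w ++ [a])) (hw : w ≠ []) : ValidWord x₀ y₀ w := by
  obtain ⟨-, hhead, hchain, hint⟩ := h
  refine ⟨hw, fun c hc => hhead c ?_, (List.isChain_append.mp hchain).1, fun i hi₁ hi₂ => ?_⟩
  · rwa [List.head?_append_of_ne_nil _ hw]
  · have := hint ⟨i, by simp⟩ hi₁ (by simp)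
    simpa [List.getElem_append_left i.isLt] using this

theorem ValidWord.map {g : X → X'} (hg : ∀ a, g a = x₀' ↔ a = x₀) {w : List (X ⊕ Y)}
    (h : ValidWord x₀ y₀ w) : ValidWord x₀' y₀ (w.map (Sum.map g id)) := by
  obtain ⟨hne, hhead, hchain, hint⟩ := h
  refine ⟨by simpa using hne, fun a ha => ?_, ?_, fun i hi₁ hi₂ => ?_⟩
  · obtain ⟨b, hb, rfl⟩ := Option.map_eq_some_iff.mp (List.head?_map ▸ ha)
    simpa using hhead b hb
  · rw [List.Chain', List.isChain_map]
    exact hchain.imp fun a b hab => by simpa using hab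
  · have hi : (i : ℕ) < w.length := by simpa using i.isLt
    have := hint ⟨i, hi⟩ hi₁ (by simpa using hi₂)
    rcases hc : w[(i : ℕ)] with a | b <;> simp_all [IsBaseLetter]

theorem freeProd_adj_of_sum_adj {u v : FPWord x₀ y₀} {w : List (X ⊕ Y)} {c d : X ⊕ Y}
    (hcd : (Gx ⊕g Gy).Adj c d) (hu : u.1 = w ++ [c]) (hv : v.1 = w ++ [d]) :
    (freeProd Gx Gy x₀ y₀).Adj u v := by
  rw [freeProd, fromRel_adj]
  refine ⟨fun h => hcd.ne <| by simpa [h, hv] using hu.symm, Or.inl ?_⟩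
  rcases c with a | a <;> rcases d with b | b <;> simp only [sum_adj] at hcd
  exacts [Or.inl ⟨w, a, b, hcd, hu, hv⟩, Or.inr (Or.inl ⟨w, a, b, hcd, hu, hv⟩)]

theorem freeProd_adj_of_isBaseLetter {u v : FPWord x₀ y₀} {c : X ⊕ Y}
    (hc : IsBaseLetter x₀ y₀ c) (hu : u.1 = v.1 ++ [c]) : (freeProd Gx Gy x₀ y₀).Adj u v := by
  rw [freeProd, fromRel_adj]
  refine ⟨fun h => by simpa [h] using congrArg List.length hu, Or.inl (Or.inr (Or.inr ?_))⟩
  rcases c with a | b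
  exacts [Or.inl (hc ▸ hu), Or.inr (hc ▸ hu)]

theorem sum_adj_isLeft_eq {c d : X ⊕ Y} (h : (Gx ⊕g Gy).Adj c d) : d.isLeft = c.isLeft := by
  rcases c with a | a <;> rcases d with b | b <;> simp_all

theorem exists_freeProd_walk_of_sum_walk {w : List (X ⊕ Y)} {c d : X ⊕ Y}
    (p : (Gx ⊕g Gy).Walk c d) (u v : FPWord x₀ y₀) (hu : u.1 = w ++ [c])
    (hv : v.1 = w ++ [d]) : ∃ q : (freeProd Gx Gy x₀ y₀).Walk u v, q.length = p.length := by
  induction p generalizing u with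
  | nil =>
    obtain rfl : u = v := Subtype.ext (hu.trans hv.symm)
    exact ⟨.nil, rfl⟩
  | @cons c c' d hcc' p ih =>
    have hc' : ValidWord x₀ y₀ (w ++ [c']) :=
      (hu ▸ u.2).append_singleton_of_isLeft_eq (sum_adj_isLeft_eq hcc')
    obtain ⟨q, hq⟩ := ih (⟨_, hc'⟩ : FPWord x₀ y₀) rfl hv
    exact ⟨.cons (freeProd_adj_of_sum_adj hcc' hu rfl) q, congrArg (· + 1) hq⟩

theorem freeProd_dist_le (hX : Gx.Preconnected) {w : List (X ⊕ Y)} {a b : X}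
    {u v : FPWord x₀ y₀} (hu : u.1 = w ++ [.inl a]) (hv : v.1 = w ++ [.inl b]) :
    (freeProd Gx Gy x₀ y₀).dist u v ≤ Gx.dist a b := by
  obtain ⟨p, hp⟩ := (hX a b).exists_walk_length_eq_dist
  obtain ⟨q, hq⟩ :=
    exists_freeProd_walk_of_sum_walk (p.map (Embedding.sumInl (H := Gy)).toHom) u v hu hv
  rw [← hp, ← p.length_map (Embedding.sumInl (H := Gy)).toHom, ← hq]
  exact dist_le q

theorem freeProd_preconnected (hX : Gx.Preconnected) (hY : Gy.Preconnected) :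
    (freeProd Gx Gy x₀ y₀).Preconnected := by
  suffices h : ∀ (w : List (X ⊕ Y)) (hw : ValidWord x₀ y₀ w),
      (freeProd Gx Gy x₀ y₀).Reachable ⟨w, hw⟩ (basePointX x₀ y₀) from
    fun u v => (h _ u.2).trans (h _ v.2).symm
  intro w
  induction w using List.reverseRecOn with
  | nil => exact fun hw => absurd rfl hw.1
  | append_singleton w c ih =>
    intro hw
    -- walk to the base point `c₀` of the current copy, then leave the copy towards `w`
    let c₀ : X ⊕ Y := c.elim (fun _ => .inl x₀) (fun _ => .inr y₀)
    have hc₀ : IsBaseLetter x₀ y₀ c₀ := by cases c <;> rfl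
    have hw₀ : ValidWord x₀ y₀ (w ++ [c₀]) :=
      hw.append_singleton_of_isLeft_eq (by cases c <;> rfl)
    obtain ⟨p⟩ : (Gx ⊕g Gy).Reachable c c₀ := by
      rcases c with a | b
      exacts [(hX a x₀).map Embedding.sumInl.toHom, (hY b y₀).map Embedding.sumInr.toHom]
    obtain ⟨q, -⟩ := exists_freeProd_walk_of_sum_walk p ⟨_, hw⟩ ⟨_, hw₀⟩ rfl rfl
    refine q.reachable.trans ?_
    rcases eq_or_ne w [] with rfl | hne
    · obtain ⟨a, rfl⟩ : ∃ a, c = .inl a := by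
        rcases c with a | b
        · exact ⟨a, rfl⟩
        · simpa using hw.2.1
      rfl
    · exact (freeProd_adj_of_isBaseLetter (v := ⟨w, hw.of_append_singleton hne⟩) hc₀
        rfl).reachable.trans (ih _)

def FPWord.mapEquiv (e : X ≃ X') (he : e x₀ = x₀') : FPWord x₀ y₀ ≃ FPWord x₀' y₀ where
  toFun u := ⟨u.1.map (Sum.map e id), u.2.map fun a => by rw [← he, e.apply_eq_iff_eq]⟩
  invFun u := ⟨u.1.map (Sum.map e.symm id), u.2.map fun a => by rw [← he, e.symm_apply_eq]⟩
  left_inv u := Subtype.ext (by simp)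
  right_inv u := Subtype.ext (by simp)

theorem FPWord.dist_mapEquiv_le_of_adj (hX' : Gx'.Preconnected) (e : X ≃ X') (he : e x₀ = x₀')
    {C : ℕ} (hC : 1 ≤ C) (hCe : ∀ a b, Gx.Adj a b → Gx'.dist (e a) (e b) ≤ C)
    {u v : FPWord x₀ y₀} (huv : (freeProd Gx Gy x₀ y₀).Adj u v) :
    (freeProd Gx' Gy x₀' y₀).dist (mapEquiv e he u) (mapEquiv e he v) ≤ C := by
  have hadj {u' v' : FPWord x₀' y₀} (h : (freeProd Gx' Gy x₀' y₀).Adj u' v') :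
      (freeProd Gx' Gy x₀' y₀).dist u' v' ≤ C :=
    (dist_eq_one_iff_adj.mpr h).le.trans hC
  have hmap (u : FPWord x₀ y₀) : (mapEquiv e he u).1 = u.1.map (Sum.map e id) := rfl
  rw [freeProd, fromRel_adj] at huv
  wlog h : (∃ (w : List (X ⊕ Y)) (a b : X), Gx.Adj a b ∧
        u.1 = w ++ [Sum.inl a] ∧ v.1 = w ++ [Sum.inl b]) ∨
      (∃ (w : List (X ⊕ Y)) (a b : Y), Gy.Adj a b ∧
        u.1 = w ++ [Sum.inr a] ∧ v.1 = w ++ [Sum.inr b]) ∨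
      u.1 = v.1 ++ [Sum.inl x₀] ∨ u.1 = v.1 ++ [Sum.inr y₀] generalizing u v
  · rw [dist_comm]
    exact this (v := u) ⟨huv.1.symm, huv.2.symm⟩ (huv.2.resolve_left h)
  rcases h with ⟨w, a, b, hab, hu, hv⟩ | ⟨w, a, b, hab, hu, hv⟩ | hu | hu
  · exact (freeProd_dist_le hX' (w := w.map (Sum.map e id)) (by simp [hmap, hu])
      (by simp [hmap, hv])).trans (hCe a b hab)
  · exact hadj (freeProd_adj_of_sum_adj (w := w.map (Sum.map e id)) (sum_adj_inr.mpr hab)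
      (by simp [hmap, hu]) (by simp [hmap, hv]))
  · exact hadj (freeProd_adj_of_isBaseLetter (c := .inl x₀') rfl (by simp [hmap, hu, he]))
  · exact hadj (freeProd_adj_of_isBaseLetter (c := .inr y₀) rfl (by simp [hmap, hu]))

theorem freeProd_bilipEquiv_of_equiv (hX : Gx.Preconnected) (hX' : Gx'.Preconnected)
    (hY : Gy.Preconnected) (e : X ≃ X') (he : e x₀ = x₀') {C : ℕ} (hC : 0 < C)
    (hCe : ∀ a b, Gx.Adj a b → Gx'.dist (e a) (e b) ≤ C)
    (hCe' : ∀ a b, Gx'.Adj a b → Gx.dist (e.symm a) (e.symm b) ≤ C) :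
    BilipEquiv (freeProd Gx Gy x₀ y₀) (freeProd Gx' Gy x₀' y₀) :=
  bilipEquiv_of_equiv (freeProd_preconnected hX hY) (freeProd_preconnected hX' hY)
    (FPWord.mapEquiv e he) hC (fun _ _ => FPWord.dist_mapEquiv_le_of_adj hX' e he hC hCe)
    (fun _ _ => FPWord.dist_mapEquiv_le_of_adj hX e.symm (by simp [← he]) hC hCe')

end FreeProduct

/-- **Lemma (plus).** Let `X` be an infinite connected graph of bounded
valence with base point `x₀`, and let `X⁺` be obtained from `X` by adding one
vertex joined to `x₀`.  Then `X` and `X⁺` are bilipschitz equivalent; hence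
for any pointed graph `Y`, `X * Y` and `X⁺ * Y` are bilipschitz equivalent. -/
theorem plusGraph_bilipEquiv (X : Type) [Infinite X] (Gx : SimpleGraph X)
    (x₀ : X) (hX : GoodGraph Gx) :
    BilipEquiv Gx (plusGraph Gx x₀) ∧
    ∀ (Y : Type) (Gy : SimpleGraph Y) (y₀ : Y), GoodGraph Gy →
      BilipEquiv (freeProd Gx Gy x₀ y₀)
        (freeProd (plusGraph Gx x₀) Gy (some x₀) y₀) := by
  have hXc : Gx.Preconnected := hX.1.preconnected
  have hplus : (plusGraph Gx x₀).Preconnected := plusGraph_preconnected hXc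
  obtain ⟨r, hr, hr₂, hrx₀⟩ := exists_injective_seq_dist_succ_le_two hXc x₀
  have hx₀ : (rayShift hr).symm x₀ = some x₀ :=
    rayShift_symm_apply_of_notMem hr fun ⟨n, hn⟩ => hrx₀ n hn
  have he (a b : X) (h : Gx.Adj a b) := dist_rayShift_symm_le_of_adj hr hXc hr₂ (x₀ := x₀) h
  have he' (u v : Option X) (h : (plusGraph Gx x₀).Adj u v) := dist_rayShift_le_of_adj hr hXc hr₂ h
  exact ⟨bilipEquiv_of_equiv hXc hplus (rayShift hr).symm (Nat.succ_pos _) he he',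
    fun Y Gy y₀ hY => freeProd_bilipEquiv_of_equiv hXc hplus hY.1.preconnected
      (rayShift hr).symm hx₀ (Nat.succ_pos _) he he'⟩
end

section
/- Let A be a nontrivial finite group and C any group. Then the kernel of the natural retraction A*C → A (which is the identity on A and kills C) is a subgroup of index |A| in A*C isomorphic to the free product of |A| copies of C. -/
/-!
Let `N` be the free product of copies `C_a` of `C`, one for each `a ∈ A`, and let `A` act on `N`
by sending `C_b` to `C_{ab}`. Then `A ∗ C ≅ N ⋊ A`: the factor `C_a` corresponds to the conjugate
`a C a⁻¹`. Under this isomorphism the retraction `A ∗ C → A` becomes the projection `N ⋊ A → A`,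
whose kernel is `N`; its index is `|A|` because the retraction is surjective.
-/

open Monoid SemidirectProduct

namespace Monoid.CoprodI

variable {ι κ M : Type*} [Monoid M]

def reindex (f : ι → κ) : CoprodI (fun _ : ι => M) →* CoprodI (fun _ : κ => M) :=
  lift fun i => of (M := fun _ : κ => M) (i := f i)

@[simp]
lemma reindex_of (f : ι → κ) (i : ι) (m : M) :
    reindex f (of (M := fun _ : ι => M) (i := i) m) = of (i := f i) m :=
  lift_of _ _

lemma reindex_comp (f : κ → ι) (g : ι → κ) :
    (reindex f).comp (reindex g) = (reindex (f ∘ g) : CoprodI (fun _ : ι => M) →* _) :=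
  ext_hom _ _ fun _ => MonoidHom.ext fun _ => by simp

lemma reindex_id : (reindex id : CoprodI (fun _ : ι => M) →* _) = .id _ :=
  ext_hom _ _ fun _ => MonoidHom.ext fun _ => by simp

variable (ι M) in
def reindexMulAut : Equiv.Perm ι →* MulAut (CoprodI fun _ : ι => M) where
  toFun σ := MonoidHom.toMulEquiv (reindex σ) (reindex σ.symm)
    (by rw [reindex_comp, σ.symm_comp_self, reindex_id])
    (by rw [reindex_comp, σ.self_comp_symm, reindex_id])
  map_one' := MulEquiv.ext fun x => DFunLike.congr_fun reindex_id x
  map_mul' σ τ := MulEquiv.ext fun x => (DFunLike.congr_fun (reindex_comp σ τ) x).symm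

@[simp]
lemma reindexMulAut_apply (σ : Equiv.Perm ι) (x : CoprodI fun _ : ι => M) :
    reindexMulAut ι M σ x = reindex σ x := rfl

variable (A C : Type*) [Group A] [Group C]

abbrev shiftAction : A →* MulAut (CoprodI fun _ : A => C) :=
  (reindexMulAut A C).comp (MulAction.toPermHom A A)

end Monoid.CoprodI

namespace SemidirectProduct

variable {N G : Type*} [Group N] [Group G] {φ : G →* MulAut N}

noncomputable def kerRightHomEquiv : (rightHom : N ⋊[φ] G →* G).ker ≃* N :=
  (MulEquiv.subgroupCongr range_inl_eq_ker_rightHom).symm.trans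
    (MonoidHom.ofInjective inl_injective).symm

end SemidirectProduct

namespace Monoid.Coprod

open Monoid.CoprodI (shiftAction)

variable (A C : Type*) [Group A] [Group C]

def toSemidirectProduct : Coprod A C →* CoprodI (fun _ : A => C) ⋊[shiftAction A C] A :=
  lift SemidirectProduct.inr
    (SemidirectProduct.inl.comp (CoprodI.of (M := fun _ : A => C) (i := 1)))

def ofSemidirectProduct : CoprodI (fun _ : A => C) ⋊[shiftAction A C] A →* Coprod A C :=
  SemidirectProduct.lift
    (CoprodI.lift fun a => (MulAut.conj (inl a)).toMonoidHom.comp inr)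
    inl
    (fun a => CoprodI.ext_hom _ _ fun b => MonoidHom.ext fun c => by simp [mul_assoc])

lemma ofSemidirectProduct_comp_toSemidirectProduct :
    (ofSemidirectProduct A C).comp (toSemidirectProduct A C) = .id _ := by
  apply hom_ext <;> ext <;> simp [toSemidirectProduct, ofSemidirectProduct]

lemma toSemidirectProduct_comp_ofSemidirectProduct :
    (toSemidirectProduct A C).comp (ofSemidirectProduct A C) = .id _ := by
  apply SemidirectProduct.hom_ext
  · refine CoprodI.ext_hom _ _ fun a => ?_
    ext c <;> simp [toSemidirectProduct, ofSemidirectProduct]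
  · ext a <;> simp [toSemidirectProduct, ofSemidirectProduct]

def equivSemidirectProduct : Coprod A C ≃* CoprodI (fun _ : A => C) ⋊[shiftAction A C] A :=
  MonoidHom.toMulEquiv _ _ (ofSemidirectProduct_comp_toSemidirectProduct A C)
    (toSemidirectProduct_comp_ofSemidirectProduct A C)

lemma rightHom_comp_equivSemidirectProduct :
    rightHom.comp (equivSemidirectProduct A C :
        Coprod A C →* CoprodI (fun _ : A => C) ⋊[shiftAction A C] A) =
      lift (.id A) (1 : C →* A) := by
  apply hom_ext <;> ext <;> simp [equivSemidirectProduct, toSemidirectProduct]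

end Monoid.Coprod

theorem ker_retraction_coprod_general (A : Type) [Group A]
    (C : Type) [Group C] :
    (Monoid.Coprod.lift (MonoidHom.id A) (1 : C →* A)).ker.index = Nat.card A ∧
    Nonempty ((Monoid.Coprod.lift (MonoidHom.id A) (1 : C →* A)).ker ≃*
      Monoid.CoprodI (fun _ : A => C)) := by
  have hsurj : Function.Surjective (Coprod.lift (.id A) (1 : C →* A)) :=
    fun a => ⟨Coprod.inl a, by simp⟩
  refine ⟨?_, ?_⟩
  · rw [Subgroup.index_ker, MonoidHom.range_eq_top.mpr hsurj, Subgroup.card_top]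
  · rw [← Coprod.rightHom_comp_equivSemidirectProduct, MonoidHom.ker_comp_mulEquiv]
    exact ⟨((Coprod.equivSemidirectProduct A C).symm.subgroupMap _).symm.trans kerRightHomEquiv⟩

/-- **Lemma.** Let `A` be a nontrivial finite group and `C` any group.  Then
the kernel of the natural retraction `A * C → A` (the identity on `A`,
trivial on `C`) is a subgroup of index `|A|` in `A * C` isomorphic to the
free product of `|A|` copies of `C`. -/
theorem ker_retraction_coprod (A : Type) [Group A] [Finite A] [Nontrivial A]
    (C : Type) [Group C] :
    (Monoid.Coprod.lift (MonoidHom.id A) (1 : C →* A)).ker.index = Nat.card A ∧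
    Nonempty ((Monoid.Coprod.lift (MonoidHom.id A) (1 : C →* A)).ker ≃*
      Monoid.CoprodI (fun _ : A => C)) :=
  ker_retraction_coprod_general A C
end

section
/- Let A be a group and let F₁ and F₂ be finite subgroups of A of the same order. Then there exists a subset X of A which is simultaneously a set of left coset representatives for F₁ and for F₂; that is, X contains exactly one element from each left coset of F₁ and exactly one element from each left coset of F₂. -/
/-!
Hall's marriage theorem gives an injection from the left cosets of `F₁` to those of `F₂` sending
each coset to one that it meets: `s` cosets of `F₁` cover `s * |F₁|` elements, and covering them
takes at least `s` cosets of `F₂` because `|F₂| = |F₁|`. By symmetry there is an injection back,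
and the Schröder–Bernstein construction, which only ever pairs a coset with one of these partners,
yields a bijection `e` between the two coset spaces with `C ∩ e C ≠ ∅` for every `C`. A choice of
one point in each `C ∩ e C` is the common transversal.
-/

open scoped Pointwise

open Function

namespace QuotientGroup

variable {A : Type*} [Group A]

theorem mem_leftCoset_iff_mk_eq {H : Subgroup A} {a y : A} :
    y ∈ a • (H : Set A) ↔ (y : A ⧸ H) = a := by
  rw [← eq_class_eq_leftCoset, Set.mem_ofPred_eq]

theorem finite_preimage_mk (H : Subgroup A) [Finite H] {t : Set (A ⧸ H)} (ht : t.Finite) :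
    (mk ⁻¹' t : Set A).Finite := by
  have := ht.to_subtype
  exact Set.finite_coe_iff.mp (Finite.of_equiv _ (preimageMkEquivSubgroupProdSet H t).symm)

def CosetsMeet (H K : Subgroup A) (C : A ⧸ H) (D : A ⧸ K) : Prop :=
  ∃ a : A, (a : A ⧸ H) = C ∧ (a : A ⧸ K) = D

theorem cosetsMeet_comm {H K : Subgroup A} {C : A ⧸ H} {D : A ⧸ K} :
    CosetsMeet H K C D ↔ CosetsMeet K H D C := by
  simp only [CosetsMeet, and_comm]

theorem exists_injective_cosetsMeet (H K : Subgroup A) [Finite H] [Finite K]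
    (hle : Nat.card K ≤ Nat.card H) :
    ∃ f : A ⧸ H → A ⧸ K, Injective f ∧ ∀ C, CosetsMeet H K C (f C) := by
  classical
  have hfin (C : A ⧸ H) : ((mk : A → A ⧸ K) '' (mk ⁻¹' {C})).Finite :=
    (finite_preimage_mk H (Set.finite_singleton C)).image _
  let t (C : A ⧸ H) : Finset (A ⧸ K) := (hfin C).toFinset
  have mem_t {C : A ⧸ H} {D : A ⧸ K} : D ∈ t C ↔ CosetsMeet H K C D := by
    simp [t, CosetsMeet]
  have hall (s : Finset (A ⧸ H)) : s.card ≤ (s.biUnion t).card := by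
    have hsub :
        (mk ⁻¹' (s : Set (A ⧸ H)) : Set A) ⊆ mk ⁻¹' ((s.biUnion t : Finset _) : Set (A ⧸ K)) :=
      fun a ha => Finset.mem_biUnion.mpr ⟨a, ha, mem_t.mpr ⟨a, rfl, rfl⟩⟩
    have := Nat.card_mono (finite_preimage_mk K (Finset.finite_toSet _)) hsub
    rw [card_preimage_mk, card_preimage_mk, Nat.card_coe_set_eq, Nat.card_coe_set_eq,
      Set.ncard_coe_finset, Set.ncard_coe_finset] at this
    refine Nat.le_of_mul_le_mul_left ?_ (Nat.card_pos (α := H))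
    exact this.trans (Nat.mul_le_mul_right _ hle)
  obtain ⟨f, hf, hft⟩ := (Finset.all_card_le_biUnion_card_iff_exists_injective t).mp hall
  exact ⟨f, hf, fun C => mem_t.mp (hft C)⟩

theorem exists_bijective_cosetsMeet (H K : Subgroup A) [Finite H] [Finite K]
    (hcard : Nat.card H = Nat.card K) :
    ∃ e : A ⧸ H → A ⧸ K, Bijective e ∧ ∀ C, CosetsMeet H K C (e C) := by
  obtain ⟨f, hf, hfC⟩ := exists_injective_cosetsMeet H K hcard.ge
  obtain ⟨g, hg, hgD⟩ := exists_injective_cosetsMeet K H hcard.le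
  exact Embedding.schroeder_bernstein_of_rel hf hg _ hfC fun D => cosetsMeet_comm.mpr (hgD D)

theorem existsUnique_mem_range_mem_leftCoset {H : Subgroup A} {ι : Type*} {x : ι → A}
    (hx : Bijective fun i => (x i : A ⧸ H)) (a : A) :
    ∃! y, y ∈ Set.range x ∧ y ∈ a • (H : Set A) := by
  simp only [mem_leftCoset_iff_mk_eq]
  obtain ⟨i, hi⟩ := hx.surjective a
  refine ⟨x i, ⟨⟨i, rfl⟩, hi⟩, ?_⟩
  rintro _ ⟨⟨j, rfl⟩, hj⟩
  rw [hx.injective (hj.trans hi.symm)]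

end QuotientGroup

open QuotientGroup in
/-- **Lemma (Hall).** Let `A` be a group and `F₁`, `F₂` finite subgroups of
`A` of the same order.  Then there is a subset `X` of `A` which is
simultaneously a set of left coset representatives for `F₁` and for `F₂`:
`X` meets every left coset of `F₁` and every left coset of `F₂` in exactly
one point. -/
theorem exists_common_transversal (A : Type) [Group A] (F₁ F₂ : Subgroup A)
    [Finite F₁] [Finite F₂] (hcard : Nat.card F₁ = Nat.card F₂) :
    ∃ X : Set A,
      (∀ a : A, ∃! x, x ∈ X ∧ x ∈ a • (F₁ : Set A)) ∧
      (∀ a : A, ∃! x, x ∈ X ∧ x ∈ a • (F₂ : Set A)) := by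
  obtain ⟨e, he, hmeet⟩ := exists_bijective_cosetsMeet F₁ F₂ hcard
  choose x hx₁ hx₂ using hmeet
  have hmk₁ : (fun C => (x C : A ⧸ F₁)) = id := funext hx₁
  have hmk₂ : (fun C => (x C : A ⧸ F₂)) = e := funext hx₂
  exact ⟨Set.range x, existsUnique_mem_range_mem_leftCoset (hmk₁ ▸ bijective_id),
    existsUnique_mem_range_mem_leftCoset (hmk₂ ▸ he)⟩
end
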